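/- arXiv:2012.13045 — 7 statements merged into one kernel-verified Lean document; each statement's English description precedes it below -/
import Mathlib

section
/- If each candidate regret bound R_i : ℕ → ℝ satisfies R_i(0) = 0 and 0 ≤ R_i(n) - R_i(n-1) ≤ 1 for all n ≥ 1, and at each round the algorithm plays a learner i_t minimizing R_i(n_i(t-1)) among active learners (incrementing only n_{i_t}), then at every time t and for all active learners i, j we have R_i(n_i(t)) ≤ R_j(n_j(t)) + 1. -/
/-- Regret Bound Balancing: if each candidate regret bound `R i` starts at `0`,
is nondecreasing with increments at most `1`, and at each round `t ≥ 1` the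
algorithm plays a learner `play t` minimizing `R i (n i (t-1))` among the active
learners (incrementing only that learner's counter), then at every time `t` the
bounds of all active learners are balanced: `R i (n i t) ≤ R j (n j t) + 1`. -/
theorem regret_bound_balancing {ι : Type*} [DecidableEq ι]
    (R : ι → ℕ → ℝ) (active : ℕ → Finset ι) (play : ℕ → ι) (n : ι → ℕ → ℕ)
    (hR0 : ∀ i, R i 0 = 0)
    (hRmono : ∀ i m, 1 ≤ m → 0 ≤ R i m - R i (m - 1))
    (hRinc : ∀ i m, 1 ≤ m → R i m - R i (m - 1) ≤ 1)
    (hn0 : ∀ i, n i 0 = 0)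
    (hstep : ∀ t, 1 ≤ t → ∀ i, n i t = n i (t - 1) + (if play t = i then 1 else 0))
    (hactive : ∀ t, 1 ≤ t → active t ⊆ active (t - 1))
    (hmem : ∀ t, 1 ≤ t → play t ∈ active t)
    (hmin : ∀ t, 1 ≤ t → ∀ j ∈ active t, R (play t) (n (play t) (t - 1)) ≤ R j (n j (t - 1))) :
    ∀ t, ∀ i ∈ active t, ∀ j ∈ active t, R i (n i t) ≤ R j (n j t) + 1 := by
  intro t
  induction t with
  | zero =>
    intro i hi j hj
    simp [hn0, hR0]
  | succ t ih =>
    intro i hi j hj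
    have ht : 1 ≤ t + 1 := Nat.le_add_left 1 t
    have hi' : i ∈ active t := hactive (t+1) ht hi
    have hj' : j ∈ active t := hactive (t+1) ht hj
    have hnj : R j (n j t) ≤ R j (n j (t+1)) := by
      rw [hstep (t+1) ht j]
      by_cases h : play (t+1) = j
      · simp only [if_pos h, Nat.add_sub_cancel]
        have := hRmono j (n j t + 1) (Nat.le_add_left 1 _)
        simp only [Nat.add_sub_cancel] at this
        linarith
      · simp [h]
    by_cases hip : i = play (t+1)
    · have hni : n i (t+1) = n i t + 1 := by
        rw [hstep (t+1) ht i]; simp [hip]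
      rw [hni]
      have h1 : R i (n i t + 1) ≤ R i (n i t) + 1 := by
        have := hRinc i (n i t + 1) (Nat.le_add_left 1 _)
        simp only [Nat.add_sub_cancel] at this
        linarith
      have h2 : R i (n i t) ≤ R j (n j t) := by
        have := hmin (t+1) ht j hj
        rw [hip]; simpa using this
      linarith
    · have hni : n i (t+1) = n i t := by
        rw [hstep (t+1) ht i]; simp [Ne.symm hip]
      rw [hni]
      have := ih i hi' j hj'
      linarith
end

section
/- Suppose R_i(n_i(t)) ≤ R_j(n_j(t)) + 1 (balancing), R_j(n_j(t)) ≥ 1, and the candidate bounds have the form R_k(n) = min(n, d_k · C · n^β) with d_k ≥ 1, C ≥ 1, β ∈ (0,1]. If n_i(t) is large enough that R_i(n_i(t)) = d_i C n_i(t)^β < n_i(t), then n_i(t)/n_j(t) ≤ 2^{1/β} · (d_j/d_i)^{1/β}; and if instead R_i(n_i(t)) = n_i(t), then n_i(t)/n_j(t) ≤ 2. -/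
open Real

/-! Since `R_j(n_j) ≥ 1`, balancing gives `R_i(n_i) ≤ 2 R_j(n_j)`. In the regime
`R_i(n_i) = d_i C n_i^β` this reads `d_i n_i^β ≤ 2 d_j n_j^β`, and taking `β`-th roots bounds
`n_i / n_j`; in the linear regime `n_i = R_i(n_i) ≤ 2 R_j(n_j) ≤ 2 n_j`. -/

theorem div_le_rpow_one_div_of_mul_rpow_le {x y a b β : ℝ} (hx : 0 ≤ x) (hy : 0 < y)
    (ha : 0 < a) (hβ : 0 < β) (h : a * x ^ β ≤ b * y ^ β) :
    x / y ≤ (b / a) ^ (1 / β) := by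
  have hpow : (x / y) ^ β ≤ b / a := by
    rw [div_rpow hx hy.le, div_le_div_iff₀ (rpow_pos_of_pos hy β) ha]
    linarith
  have hxy : 0 ≤ x / y := div_nonneg hx hy.le
  rw [one_div, le_rpow_inv_iff_of_pos hxy ((rpow_nonneg hxy β).trans hpow) hβ]
  exact hpow

theorem play_ratio_bound_general (ni nj : ℕ)
    (di dj C β : ℝ) (hdi : 1 ≤ di) (hdj : 1 ≤ dj) (hC : 1 ≤ C)
    (hβ0 : 0 < β)
    (hbal : min (ni : ℝ) (di * C * (ni : ℝ) ^ β)
            ≤ min (nj : ℝ) (dj * C * (nj : ℝ) ^ β) + 1)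
    (hRj1 : 1 ≤ min (nj : ℝ) (dj * C * (nj : ℝ) ^ β)) :
    (di * C * (ni : ℝ) ^ β < (ni : ℝ) →
      (ni : ℝ) / (nj : ℝ) ≤ 2 ^ (1 / β) * (dj / di) ^ (1 / β)) ∧
    ((ni : ℝ) ≤ di * C * (ni : ℝ) ^ β →
      (ni : ℝ) / (nj : ℝ) ≤ 2) := by
  have hbal₂ : min (ni : ℝ) (di * C * (ni : ℝ) ^ β)
      ≤ 2 * min (nj : ℝ) (dj * C * (nj : ℝ) ^ β) := by linarith
  have hnj : (0 : ℝ) < nj := by linarith [min_le_left (nj : ℝ) (dj * C * (nj : ℝ) ^ β)]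
  constructor
  · intro hsublinear
    rw [min_eq_right hsublinear.le] at hbal₂
    have hpow : (di * C) * (ni : ℝ) ^ β ≤ (2 * dj * C) * (nj : ℝ) ^ β := by
      linarith [min_le_right (nj : ℝ) (dj * C * (nj : ℝ) ^ β)]
    calc (ni : ℝ) / nj ≤ (2 * dj * C / (di * C)) ^ (1 / β) :=
          div_le_rpow_one_div_of_mul_rpow_le (Nat.cast_nonneg ni) hnj (by positivity) hβ0 hpow
      _ = (2 * (dj / di)) ^ (1 / β) := by
          congr 1
          field_simp
      _ = 2 ^ (1 / β) * (dj / di) ^ (1 / β) := mul_rpow zero_le_two (by positivity)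
  · intro hlinear
    rw [min_eq_left hlinear] at hbal₂
    rw [div_le_iff₀ hnj]
    linarith [min_le_left (nj : ℝ) (dj * C * (nj : ℝ) ^ β)]

/-- Play-ratio bound under balancing with candidate bounds `R_k(n) = min(n, d_k C n^β)`.
If `R_i(n_i) ≤ R_j(n_j) + 1` and `R_j(n_j) ≥ 1`, then:
(1) if `R_i` is in the `√`-type regime (`d_i C n_i^β < n_i`), then
`n_i/n_j ≤ 2^(1/β) (d_j/d_i)^(1/β)`;
(2) if `R_i` is in the linear regime (`n_i ≤ d_i C n_i^β`), then `n_i/n_j ≤ 2`. -/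
theorem play_ratio_bound (ni nj : ℕ) (hni : 0 < ni) (hnj : 0 < nj)
    (di dj C β : ℝ) (hdi : 1 ≤ di) (hdj : 1 ≤ dj) (hC : 1 ≤ C)
    (hβ0 : 0 < β) (hβ1 : β ≤ 1)
    (hbal : min (ni : ℝ) (di * C * (ni : ℝ) ^ β)
            ≤ min (nj : ℝ) (dj * C * (nj : ℝ) ^ β) + 1)
    (hRj1 : 1 ≤ min (nj : ℝ) (dj * C * (nj : ℝ) ^ β)) :
    (di * C * (ni : ℝ) ^ β < (ni : ℝ) →
      (ni : ℝ) / (nj : ℝ) ≤ 2 ^ (1 / β) * (dj / di) ^ (1 / β)) ∧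
    ((ni : ℝ) ≤ di * C * (ni : ℝ) ^ β →
      (ni : ℝ) / (nj : ℝ) ≤ 2) :=
  play_ratio_bound_general ni nj di dj C β hdi hdj hC hβ0 hbal hRj1
end

section
/- Let x_1, …, x_n ∈ ℝ^d, V_0 a positive definite d×d matrix, V_t = V_0 + ∑_{i=1}^t x_i x_iᵀ, and b > 0. Then ∑_{t=1}^n min(b, ‖x_t‖²_{V_{t-1}^{-1}}) ≤ (b / log(b+1)) · log(det V_n / det V_0) ≤ (1 + b) · log(det V_n / det V_0). -/
open Real Finset Matrix

lemma outer_posSemidef {d : ℕ} (y : Fin d → ℝ) : (vecMulVec y y).PosSemidef := by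
  have h := Matrix.posSemidef_conjTranspose_mul_self (Matrix.replicateRow Unit y)
  rw [Matrix.conjTranspose_replicateRow] at h
  simpa [vecMulVec_eq Unit] using h

lemma det_step {d : ℕ} (W : Matrix (Fin d) (Fin d) ℝ) (hW : W.PosDef) (y : Fin d → ℝ) :
    (W + vecMulVec y y).det = W.det * (1 + y ⬝ᵥ W⁻¹ *ᵥ y) := by
  rw [vecMulVec_eq Unit, Matrix.det_add_replicateCol_mul_replicateRow hW.det_pos.ne'.isUnit]
  congr 1
  rw [Matrix.det_unique]
  simp only [Matrix.add_apply, Matrix.one_apply_eq, Matrix.mul_apply, Matrix.replicateRow_apply,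
    Matrix.replicateCol_apply, dotProduct, Matrix.mulVec, dotProduct]
  simp only [Finset.sum_mul, Finset.mul_sum]
  congr 1
  rw [Finset.sum_comm]
  exact Finset.sum_congr rfl fun i _ => Finset.sum_congr rfl fun j _ => by ring

lemma min_le_clog {b u : ℝ} (hb : 0 < b) (hu : 0 ≤ u) :
    min b u ≤ b / Real.log (b + 1) * Real.log (1 + u) := by
  have hlb : 0 < Real.log (b + 1) := Real.log_pos (by linarith)
  rcases le_total u b with h | h
  · rw [min_eq_right h]
    have hkey : (u / b) * Real.log (b + 1) ≤ Real.log (1 + u) := by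
      have hc := (strictConcaveOn_log_Ioi.concaveOn).2 (Set.mem_Ioi.2 one_pos)
        (Set.mem_Ioi.2 (show (0:ℝ) < b + 1 by linarith))
        (show (0:ℝ) ≤ 1 - u / b by rw [sub_nonneg]; exact (div_le_one hb).2 h)
        (show (0:ℝ) ≤ u / b by positivity)
        (show 1 - u / b + u / b = 1 by ring)
      have h1 : (1 - u / b) • (1:ℝ) + (u / b) • (b + 1) = 1 + u := by
        rw [smul_eq_mul, smul_eq_mul, mul_one, mul_add, mul_one, div_mul_cancel₀ _ hb.ne']; ring
      rw [h1] at hc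
      simpa [Real.log_one, smul_eq_mul] using hc
    rw [div_mul_eq_mul_div, le_div_iff₀ hlb]
    calc u * Real.log (b + 1) = b * ((u / b) * Real.log (b + 1)) := by field_simp
      _ ≤ b * Real.log (1 + u) := by
        exact mul_le_mul_of_nonneg_left hkey hb.le
  · rw [min_eq_left h]
    have hlog : Real.log (b + 1) ≤ Real.log (1 + u) :=
      Real.log_le_log (by linarith) (by linarith)
    calc b = b / Real.log (b + 1) * Real.log (b + 1) := by field_simp
      _ ≤ b / Real.log (b + 1) * Real.log (1 + u) :=
        mul_le_mul_of_nonneg_left hlog (by positivity)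

/-- Generalized elliptical potential lemma with truncation level `b`:
for `V_t = V_0 + ∑_{i<t} x_i x_iᵀ` with `V_0` positive definite and `b > 0`,
`∑_{t<n} min(b, ‖x_t‖²_{V_t⁻¹}) ≤ (b/log(b+1)) log(det V_n / det V_0)
≤ (1+b) log(det V_n / det V_0)`. -/
theorem elliptical_potential (d n : ℕ) (x : ℕ → Fin d → ℝ)
    (V0 : Matrix (Fin d) (Fin d) ℝ) (hV0 : V0.PosDef) (b : ℝ) (hb : 0 < b)
    (V : ℕ → Matrix (Fin d) (Fin d) ℝ)
    (hV : ∀ t, V t = V0 + ∑ i ∈ Finset.range t, vecMulVec (x i) (x i)) :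
    (∑ t ∈ Finset.range n, min b (x t ⬝ᵥ (V t)⁻¹ *ᵥ x t))
      ≤ (b / Real.log (b + 1)) * Real.log ((V n).det / V0.det)
    ∧ (b / Real.log (b + 1)) * Real.log ((V n).det / V0.det)
      ≤ (1 + b) * Real.log ((V n).det / V0.det) := by
  have hVpos : ∀ t, (V t).PosDef := by
    intro t
    rw [hV t]
    induction t with
    | zero => simpa using hV0
    | succ k ih =>
      rw [Finset.sum_range_succ, ← add_assoc]
      exact ih.add_posSemidef (outer_posSemidef (x k))
  have hstep : ∀ t, V (t + 1) = V t + vecMulVec (x t) (x t) := by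
    intro t
    rw [hV (t + 1), hV t, Finset.sum_range_succ, add_assoc]
  set u : ℕ → ℝ := fun t => x t ⬝ᵥ (V t)⁻¹ *ᵥ x t with hu
  have hunn : ∀ t, 0 ≤ u t := by
    intro t
    have h := ((hVpos t).inv.posSemidef).dotProduct_mulVec_nonneg (x t)
    simpa [hu] using h
  have hdet : ∀ t, (V (t + 1)).det = (V t).det * (1 + u t) := by
    intro t
    rw [hstep t]
    exact det_step (V t) (hVpos t) (x t)
  have hdetpos : ∀ t, 0 < (V t).det := fun t => (hVpos t).det_pos
  have htel : Real.log ((V n).det / V0.det)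
      = ∑ t ∈ Finset.range n, Real.log (1 + u t) := by
    induction n with
    | zero => simp [hV 0, div_self hV0.det_pos.ne']
    | succ k ih =>
      rw [Finset.sum_range_succ, ← ih, hdet k, mul_div_right_comm,
        Real.log_mul (div_ne_zero (hdetpos k).ne' hV0.det_pos.ne') (by nlinarith [hunn k])]
  have h1 : (∑ t ∈ Finset.range n, min b (u t))
      ≤ (b / Real.log (b + 1)) * Real.log ((V n).det / V0.det) := by
    rw [htel, Finset.mul_sum]
    exact Finset.sum_le_sum fun t _ => min_le_clog hb (hunn t)
  have hlognn : 0 ≤ Real.log ((V n).det / V0.det) := by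
    rw [htel]
    exact Finset.sum_nonneg fun t _ =>
      Real.log_nonneg (by linarith [hunn t])
  have hc : b / Real.log (b + 1) ≤ 1 + b := by
    have hlb : 0 < Real.log (b + 1) := Real.log_pos (by linarith)
    rw [div_le_iff₀ hlb]
    have h2 : Real.log (1 / (b + 1)) ≤ 1 / (b + 1) - 1 :=
      Real.log_le_sub_one_of_pos (by positivity)
    rw [Real.log_div one_ne_zero (by positivity), Real.log_one] at h2
    have h3 : b / (b + 1) ≤ Real.log (b + 1) := by
      have h4 : b / (b + 1) = 1 - 1 / (b + 1) := by field_simp; ring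
      linarith
    calc b = (b + 1) * (b / (b + 1)) := by field_simp
      _ ≤ (b + 1) * Real.log (b + 1) :=
        mul_le_mul_of_nonneg_left h3 (by positivity)
      _ = (1 + b) * Real.log (b + 1) := by ring
  exact ⟨h1, mul_le_mul_of_nonneg_right hc hlognn⟩
end

section
/- For all b > 0 and all u ≥ 0: min(b, u) ≤ (b / log(1 + b)) · log(1 + u). -/
/-!
Let `φ u = log (1 + u)`. For `u ≥ b` the claim is `b ≤ b φ u / φ b`, i.e. monotonicity of `φ`.
For `0 ≤ u ≤ b` it is `u φ b ≤ b φ u`: the chord of the concave function `φ` from `(0, 0)` to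
`(b, φ b)` lies below its graph.
-/

open Real

theorem ConcaveOn.mul_le_map_mul {𝕜 : Type*} [Field 𝕜] [LinearOrder 𝕜] [IsStrictOrderedRing 𝕜]
    {s : Set 𝕜} {f : 𝕜 → 𝕜} (hf : ConcaveOn 𝕜 s f) (h₀ : (0 : 𝕜) ∈ s) (hf₀ : 0 ≤ f 0)
    {x t : 𝕜} (hx : x ∈ s) (ht₀ : 0 ≤ t) (ht₁ : t ≤ 1) : t * f x ≤ f (t * x) := by
  have h := hf.2 h₀ hx (sub_nonneg.2 ht₁) ht₀ (sub_add_cancel 1 t)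
  simp only [smul_eq_mul, mul_zero, zero_add] at h
  linarith [mul_nonneg (sub_nonneg.2 ht₁) hf₀]

theorem concaveOn_log_one_add : ConcaveOn ℝ (Set.Ioi (-1)) fun x => log (1 + x) := by
  refine (strictConcaveOn_log_Ioi.concaveOn.translate_right 1).subset ?_ (convex_Ioi (-1))
  intro x hx
  simp only [Set.mem_preimage, Set.mem_Ioi] at hx ⊢
  linarith

theorem mul_log_one_add_le_mul_log_one_add {b u : ℝ} (hb : 0 < b) (hu : 0 ≤ u) (hub : u ≤ b) :
    u * log (1 + b) ≤ b * log (1 + u) := by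
  have h := concaveOn_log_one_add.mul_le_map_mul (by norm_num) (by simp)
    (x := b) (by simp only [Set.mem_Ioi]; linarith) (div_nonneg hu hb.le) ((div_le_one hb).2 hub)
  rw [div_mul_cancel₀ u hb.ne'] at h
  calc u * log (1 + b) = b * (u / b * log (1 + b)) := by field_simp
    _ ≤ b * log (1 + u) := mul_le_mul_of_nonneg_left h hb.le

/-- Pointwise inequality for the generalized elliptical potential lemma:
for `b > 0` and `u ≥ 0`, `min b u ≤ (b / log(1+b)) · log(1+u)`. -/
theorem min_le_log_bound (b u : ℝ) (hb : 0 < b) (hu : 0 ≤ u) :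
    min b u ≤ (b / Real.log (1 + b)) * Real.log (1 + u) := by
  have hlog_pos : 0 < log (1 + b) := log_pos (by linarith)
  rw [div_mul_eq_mul_div, le_div_iff₀ hlog_pos]
  rcases le_total b u with hbu | hub
  · rw [min_eq_left hbu]
    exact mul_le_mul_of_nonneg_left (log_le_log (by linarith) (by linarith)) hb.le
  · rw [min_eq_right hub]
    exact mul_log_one_add_le_mul_log_one_add hb hu hub
end

section
/- Under the hypotheses of the optimism step (confidence ellipsoids containing θ⋆ at all rounds, Σ_t = λI + ∑_{l<t} a_l a_lᵀ, ‖a‖₂ ≤ L for all actions), the cumulative pseudo-regret of OFUL satisfies Reg(T) = ∑_{t=1}^T ⟨θ⋆, a_t⋆ − a_t⟩ ≤ 2 β_max √( d T (1 + L²/λ) log((dλ + T L²)/(dλ)) ), where β_max = max_{t∈[T]} β_t. -/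
open Real Finset Matrix

section OfulAux

variable {d : ℕ}

lemma oful_vecMulVec_mulVec (a b x : Fin d → ℝ) :
    (vecMulVec a b) *ᵥ x = (b ⬝ᵥ x) • a := by
  ext i
  simp [vecMulVec_apply, mulVec, dotProduct, Finset.mul_sum, mul_assoc, mul_comm, mul_left_comm]

lemma oful_dotProduct_self_nonneg (x : Fin d → ℝ) : 0 ≤ x ⬝ᵥ x :=
  Finset.sum_nonneg fun _ _ => mul_self_nonneg _

lemma oful_dot_le_sqrt_mul_sqrt (u v : Fin d → ℝ) :
    u ⬝ᵥ v ≤ Real.sqrt (u ⬝ᵥ u) * Real.sqrt (v ⬝ᵥ v) := by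
  have h := Finset.sum_mul_sq_le_sq_mul_sq Finset.univ u v
  have h2 : u ⬝ᵥ v ≤ Real.sqrt ((u ⬝ᵥ v) ^ 2) := by
    rw [Real.sqrt_sq_eq_abs]; exact le_abs_self _
  refine h2.trans ?_
  rw [← Real.sqrt_mul (oful_dotProduct_self_nonneg u)]
  apply Real.sqrt_le_sqrt
  simpa [dotProduct, sq] using h

open scoped MatrixOrder in
lemma oful_form_cs {M : Matrix (Fin d) (Fin d) ℝ} (hM : M.PosSemidef) (x y : Fin d → ℝ) :
    x ⬝ᵥ M *ᵥ y ≤ Real.sqrt (x ⬝ᵥ M *ᵥ x) * Real.sqrt (y ⬝ᵥ M *ᵥ y) := by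
  obtain ⟨S, hSsym, hSS⟩ : ∃ S : Matrix (Fin d) (Fin d) ℝ, Sᵀ = S ∧ S * S = M :=
    ⟨CFC.sqrt M, by
      have := (CFC.sqrt_nonneg M).posSemidef.isHermitian
      simpa [Matrix.IsHermitian, conjTranspose_eq_transpose_of_trivial] using this, CFC.sqrt_mul_sqrt_self M hM.nonneg⟩
  have key : ∀ z w : Fin d → ℝ, z ⬝ᵥ M *ᵥ w = (S *ᵥ z) ⬝ᵥ (S *ᵥ w) := by
    intro z w
    rw [← hSS, ← Matrix.mulVec_mulVec, Matrix.dotProduct_mulVec]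
    rw [← Matrix.mulVec_transpose, hSsym]
  rw [key x y, key x x, key y y]
  exact oful_dot_le_sqrt_mul_sqrt _ _

lemma oful_quad_sig (lam : ℝ) (s : Finset ℕ) (a : ℕ → Fin d → ℝ) (x : Fin d → ℝ) :
    x ⬝ᵥ (lam • (1 : Matrix (Fin d) (Fin d) ℝ) + ∑ l ∈ s, vecMulVec (a l) (a l)) *ᵥ x
      = lam * (x ⬝ᵥ x) + ∑ l ∈ s, (a l ⬝ᵥ x) ^ 2 := by
  rw [Matrix.add_mulVec, dotProduct_add, Matrix.smul_mulVec, Matrix.one_mulVec]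
  congr 1
  · rw [dotProduct_smul, smul_eq_mul]
  · induction s using Finset.induction with
    | empty => simp
    | insert _ _ h ih =>
      rw [Finset.sum_insert h, Finset.sum_insert h, Matrix.add_mulVec, dotProduct_add, ih,
        oful_vecMulVec_mulVec, dotProduct_smul, smul_eq_mul, dotProduct_comm, sq]

lemma oful_transpose_sig (lam : ℝ) (s : Finset ℕ) (a : ℕ → Fin d → ℝ) :
    (lam • (1 : Matrix (Fin d) (Fin d) ℝ) + ∑ l ∈ s, vecMulVec (a l) (a l))ᵀ
      = lam • (1 : Matrix (Fin d) (Fin d) ℝ) + ∑ l ∈ s, vecMulVec (a l) (a l) := by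
  rw [Matrix.transpose_add, Matrix.transpose_smul, Matrix.transpose_one, Matrix.transpose_sum]
  congr 1
  refine Finset.sum_congr rfl fun l _ => ?_
  ext i j
  simp [vecMulVec_apply, mul_comm]

lemma oful_posDef_sig {lam : ℝ} (hlam : 0 < lam) (s : Finset ℕ) (a : ℕ → Fin d → ℝ) :
    (lam • (1 : Matrix (Fin d) (Fin d) ℝ) + ∑ l ∈ s, vecMulVec (a l) (a l)).PosDef := by
  refine Matrix.PosDef.of_dotProduct_mulVec_pos ?_ ?_
  · rw [Matrix.IsHermitian, conjTranspose_eq_transpose_of_trivial, oful_transpose_sig]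
  · intro x hx
    have hxx : 0 < x ⬝ᵥ x :=
      lt_of_le_of_ne (oful_dotProduct_self_nonneg x)
        (fun h => hx (dotProduct_self_eq_zero.mp h.symm))
    have hq := oful_quad_sig lam s a x
    simp only [star_trivial]
    rw [hq]
    have hs : 0 ≤ ∑ l ∈ s, (a l ⬝ᵥ x) ^ 2 := Finset.sum_nonneg fun l _ => sq_nonneg _
    nlinarith

lemma oful_mulVec_inv_cancel {M : Matrix (Fin d) (Fin d) ℝ} (hM : M.PosDef) (x : Fin d → ℝ) :
    M *ᵥ (M⁻¹ *ᵥ x) = x := by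
  rw [Matrix.mulVec_mulVec, Matrix.mul_nonsing_inv _ hM.det_pos.ne'.isUnit, Matrix.one_mulVec]

lemma oful_inv_quad_eq {M : Matrix (Fin d) (Fin d) ℝ} (hM : M.PosDef) (x : Fin d → ℝ) :
    (M⁻¹ *ᵥ x) ⬝ᵥ M *ᵥ (M⁻¹ *ᵥ x) = x ⬝ᵥ M⁻¹ *ᵥ x := by
  rw [oful_mulVec_inv_cancel hM, dotProduct_comm]

lemma oful_inv_quad_nonneg {M : Matrix (Fin d) (Fin d) ℝ} (hM : M.PosDef) (x : Fin d → ℝ) :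
    0 ≤ x ⬝ᵥ M⁻¹ *ᵥ x := by
  simpa [star_trivial] using hM.inv.posSemidef.dotProduct_mulVec_nonneg x

lemma oful_inv_quad_le {M : Matrix (Fin d) (Fin d) ℝ} (hM : M.PosDef) {lam : ℝ} (hlam : 0 < lam)
    (hlow : ∀ y : Fin d → ℝ, lam * (y ⬝ᵥ y) ≤ y ⬝ᵥ M *ᵥ y) (x : Fin d → ℝ) :
    x ⬝ᵥ M⁻¹ *ᵥ x ≤ (x ⬝ᵥ x) / lam := by
  set w := M⁻¹ *ᵥ x with hw
  set q := x ⬝ᵥ M⁻¹ *ᵥ x with hq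
  have h1 : lam * (w ⬝ᵥ w) ≤ q := by rw [hq, ← oful_inv_quad_eq hM]; exact hlow w
  have h2 : q ≤ Real.sqrt (x ⬝ᵥ x) * Real.sqrt (w ⬝ᵥ w) := oful_dot_le_sqrt_mul_sqrt x w
  have hq0 : 0 ≤ q := oful_inv_quad_nonneg hM x
  have h2' : q ^ 2 ≤ (x ⬝ᵥ x) * (w ⬝ᵥ w) := by
    calc q ^ 2 ≤ (Real.sqrt (x ⬝ᵥ x) * Real.sqrt (w ⬝ᵥ w)) ^ 2 := by
          apply pow_le_pow_left₀ hq0 h2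
      _ = (x ⬝ᵥ x) * (w ⬝ᵥ w) := by
          rw [mul_pow, Real.sq_sqrt (oful_dotProduct_self_nonneg x),
            Real.sq_sqrt (oful_dotProduct_self_nonneg w)]
  rw [le_div_iff₀ hlam]
  rcases hq0.eq_or_lt with h | h
  · nlinarith [oful_dotProduct_self_nonneg x]
  · nlinarith [mul_le_mul_of_nonneg_left h1 (oful_dotProduct_self_nonneg x),
      mul_le_mul_of_nonneg_left h2' hlam.le]

lemma oful_cross_bound {M : Matrix (Fin d) (Fin d) ℝ} (hM : M.PosDef) {β : ℝ} (hβ : 0 ≤ β)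
    {v : Fin d → ℝ} (hv : v ⬝ᵥ M *ᵥ v ≤ β ^ 2) (y : Fin d → ℝ) :
    v ⬝ᵥ y ≤ β * Real.sqrt (y ⬝ᵥ M⁻¹ *ᵥ y) := by
  have h1 : v ⬝ᵥ y = v ⬝ᵥ M *ᵥ (M⁻¹ *ᵥ y) := by rw [oful_mulVec_inv_cancel hM]
  rw [h1]
  refine (oful_form_cs hM.posSemidef v (M⁻¹ *ᵥ y)).trans ?_
  rw [oful_inv_quad_eq hM]
  have h2 : Real.sqrt (v ⬝ᵥ M *ᵥ v) ≤ β := by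
    refine (Real.sqrt_le_sqrt hv).trans ?_
    rw [Real.sqrt_sq hβ]
  exact mul_le_mul_of_nonneg_right h2 (Real.sqrt_nonneg _)

lemma oful_det_add_vecMulVec {M : Matrix (Fin d) (Fin d) ℝ} (hM : M.PosDef) (a : Fin d → ℝ) :
    (M + vecMulVec a a).det = M.det * (1 + a ⬝ᵥ M⁻¹ *ᵥ a) := by
  have hU : IsUnit M.det := hM.det_pos.ne'.isUnit
  rw [vecMulVec_eq Unit, Matrix.det_add_replicateCol_mul_replicateRow hU]
  congr 1
  rw [Matrix.det_unique]
  simp only [Pi.add_apply, Matrix.add_apply, Matrix.one_apply_eq]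
  rw [← Matrix.replicateRow_vecMul, Matrix.replicateRow_mul_replicateCol_apply, ← Matrix.dotProduct_mulVec]

lemma oful_det_le_pow_trace_div {M : Matrix (Fin d) (Fin d) ℝ} (hM : M.PosSemidef)
    (hd : 0 < d) : M.det ≤ (M.trace / d) ^ d := by
  have hH := hM.isHermitian
  set μ := hH.eigenvalues with hμ
  have hdet : M.det = ∏ i, μ i := by
    have := hH.det_eq_prod_eigenvalues
    simpa using this
  have htr : M.trace = ∑ i, μ i := by
    simpa using hH.trace_eq_sum_eigenvalues
  have hnn : ∀ i, 0 ≤ μ i := hM.eigenvalues_nonneg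
  have hd' : (0:ℝ) < d := Nat.cast_pos.mpr hd
  have hw : ∑ _i : Fin d, (d:ℝ)⁻¹ = 1 := by
    simp [Finset.sum_const, Finset.card_univ]
    field_simp
  have hgm := Real.geom_mean_le_arith_mean_weighted Finset.univ (fun _ => (d:ℝ)⁻¹) μ
    (fun _ _ => by positivity) hw (fun i _ => hnn i)
  have hrhs : ∑ i, (d:ℝ)⁻¹ * μ i = M.trace / d := by
    rw [htr, ← Finset.mul_sum]; ring
  rw [hrhs] at hgm
  have hprod_nonneg : 0 ≤ ∏ i, μ i ^ (d:ℝ)⁻¹ :=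
    Finset.prod_nonneg fun i _ => Real.rpow_nonneg (hnn i) _
  have hpow := pow_le_pow_left₀ hprod_nonneg hgm d
  rw [← Finset.prod_pow] at hpow
  have hid : ∀ i : Fin d, (μ i ^ (d:ℝ)⁻¹) ^ d = μ i := by
    intro i
    rw [← Real.rpow_natCast (μ i ^ (d:ℝ)⁻¹) d, ← Real.rpow_mul (hnn i),
      inv_mul_cancel₀ hd'.ne', Real.rpow_one]
  simp_rw [hid] at hpow
  rw [hdet]
  exact hpow

lemma oful_trace_vecMulVec (a : Fin d → ℝ) : (vecMulVec a a).trace = a ⬝ᵥ a := by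
  simp [Matrix.trace, Matrix.diag, vecMulVec_apply, dotProduct]

lemma oful_scalar_log {q b : ℝ} (hq : 0 ≤ q) (hqb : q ≤ b) :
    q ≤ (1 + b) * Real.log (1 + q) := by
  have h1q : (0:ℝ) < 1 + q := by linarith
  have hlog : q / (1 + q) ≤ Real.log (1 + q) := by
    have := Real.log_le_sub_one_of_pos (x := (1 + q)⁻¹) (by positivity)
    rw [Real.log_inv] at this
    have hrw : (1 + q)⁻¹ - 1 = -(q / (1 + q)) := by field_simp; ring
    rw [hrw] at this
    linarith
  have hlog0 : 0 ≤ Real.log (1 + q) := Real.log_nonneg (by linarith)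
  have step : q ≤ (1 + q) * Real.log (1 + q) := by
    have := mul_le_mul_of_nonneg_left hlog h1q.le
    rwa [mul_div_cancel₀ _ h1q.ne'] at this
  refine step.trans ?_
  exact mul_le_mul_of_nonneg_right (by linarith) hlog0

end OfulAux

/-- Cumulative regret bound for OFUL. With `Σ_t = λI + ∑_{l<t} a_l a_lᵀ`,
confidence ellipsoids containing `θ⋆` at all rounds (`‖θ⋆ − θ̂_t‖_{Σ_t} ≤ β_t`),
action norms bounded by `L`, optimal actions `a⋆_t` and optimistic choices
`a_t`, the pseudo-regret satisfies
`∑_{t<T} ⟨θ⋆, a⋆_t − a_t⟩ ≤ 2 β_max √(d T (1 + L²/λ) log((dλ + T L²)/(dλ)))`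
where `β_max = max_{t<T} β_t`. -/
theorem oful_regret_bound (d T : ℕ) (hT : 0 < T) (lam L : ℝ)
    (hlam : 0 < lam) (hL : 0 ≤ L)
    (A : ℕ → Finset (Fin d → ℝ)) (hA : ∀ t, (A t).Nonempty)
    (a astar : ℕ → Fin d → ℝ) (θstar : Fin d → ℝ) (θhat : ℕ → Fin d → ℝ)
    (β : ℕ → ℝ) (hβ : ∀ t, 0 ≤ β t)
    (Sig : ℕ → Matrix (Fin d) (Fin d) ℝ)
    (hSig : ∀ t, Sig t = lam • (1 : Matrix (Fin d) (Fin d) ℝ)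
              + ∑ l ∈ Finset.range t, vecMulVec (a l) (a l))
    (hnorm : ∀ t, t < T → ∀ y ∈ A t, Real.sqrt (y ⬝ᵥ y) ≤ L)
    (ha_mem : ∀ t, t < T → a t ∈ A t)
    (hastar_mem : ∀ t, t < T → astar t ∈ A t)
    (hastar_opt : ∀ t, t < T → ∀ y ∈ A t, θstar ⬝ᵥ y ≤ θstar ⬝ᵥ astar t)
    (ha_opt : ∀ t, t < T → ∀ y ∈ A t,
      θhat t ⬝ᵥ y + β t * Real.sqrt (y ⬝ᵥ (Sig t)⁻¹ *ᵥ y)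
        ≤ θhat t ⬝ᵥ a t + β t * Real.sqrt (a t ⬝ᵥ (Sig t)⁻¹ *ᵥ a t))
    (hconf : ∀ t, t < T →
      Real.sqrt ((θstar - θhat t) ⬝ᵥ (Sig t) *ᵥ (θstar - θhat t)) ≤ β t) :
    ∑ t ∈ Finset.range T, (θstar ⬝ᵥ astar t - θstar ⬝ᵥ a t)
      ≤ 2 * ((Finset.range T).sup' (Finset.nonempty_range_iff.mpr hT.ne') β)
        * Real.sqrt (d * T * (1 + L ^ 2 / lam)
            * Real.log ((d * lam + T * L ^ 2) / (d * lam))) := by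
  rcases Nat.eq_zero_or_pos d with hd | hd
  · subst hd
    simp [dotProduct]
  -- notation
  set B := (Finset.range T).sup' (Finset.nonempty_range_iff.mpr hT.ne') β with hBdef
  have hmemT : ∀ t, t < T → t ∈ Finset.range T := fun t ht => Finset.mem_range.mpr ht
  have hBt : ∀ t, t < T → β t ≤ B := fun t ht => Finset.le_sup' β (hmemT t ht)
  have hB0 : 0 ≤ B := (hβ 0).trans (hBt 0 hT)
  have hpos : ∀ t, (Sig t).PosDef := fun t => by
    rw [hSig t]; exact oful_posDef_sig hlam _ _
  have hlow : ∀ t (y : Fin d → ℝ), lam * (y ⬝ᵥ y) ≤ y ⬝ᵥ (Sig t) *ᵥ y := by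
    intro t y
    rw [hSig t, oful_quad_sig]
    have : 0 ≤ ∑ l ∈ Finset.range t, (a l ⬝ᵥ y) ^ 2 :=
      Finset.sum_nonneg fun l _ => sq_nonneg _
    linarith
  set q : ℕ → ℝ := fun t => a t ⬝ᵥ (Sig t)⁻¹ *ᵥ a t with hqdef
  have hq0 : ∀ t, 0 ≤ q t := fun t => oful_inv_quad_nonneg (hpos t) _
  have hdot_le : ∀ t, t < T → a t ⬝ᵥ a t ≤ L ^ 2 := by
    intro t ht
    have h1 := hnorm t ht (a t) (ha_mem t ht)
    have h2 : a t ⬝ᵥ a t = Real.sqrt (a t ⬝ᵥ a t) ^ 2 :=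
      (Real.sq_sqrt (oful_dotProduct_self_nonneg _)).symm
    rw [h2]
    exact pow_le_pow_left₀ (Real.sqrt_nonneg _) h1 2
  have hqb : ∀ t, t < T → q t ≤ L ^ 2 / lam := by
    intro t ht
    refine (oful_inv_quad_le (hpos t) hlam (hlow t) (a t)).trans ?_
    exact div_le_div_of_nonneg_right (hdot_le t ht) hlam.le
  -- per-round regret bound
  have hround : ∀ t, t < T →
      θstar ⬝ᵥ astar t - θstar ⬝ᵥ a t ≤ 2 * β t * Real.sqrt (q t) := by
    intro t ht
    have hu : (θstar - θhat t) ⬝ᵥ (Sig t) *ᵥ (θstar - θhat t) ≤ (β t) ^ 2 := by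
      have h1 := hconf t ht
      have hnn : 0 ≤ (θstar - θhat t) ⬝ᵥ (Sig t) *ᵥ (θstar - θhat t) := by
        simpa [star_trivial] using (hpos t).posSemidef.dotProduct_mulVec_nonneg (θstar - θhat t)
      calc (θstar - θhat t) ⬝ᵥ (Sig t) *ᵥ (θstar - θhat t)
          = Real.sqrt ((θstar - θhat t) ⬝ᵥ (Sig t) *ᵥ (θstar - θhat t)) ^ 2 :=
            (Real.sq_sqrt hnn).symm
        _ ≤ (β t) ^ 2 := pow_le_pow_left₀ (Real.sqrt_nonneg _) h1 2
    have hu' : (θhat t - θstar) ⬝ᵥ (Sig t) *ᵥ (θhat t - θstar) ≤ (β t) ^ 2 := by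
      have : θhat t - θstar = -(θstar - θhat t) := by ring
      rw [this, Matrix.mulVec_neg, neg_dotProduct, dotProduct_neg, neg_neg]
      exact hu
    have c1 := oful_cross_bound (hpos t) (hβ t) hu (astar t)
    have c2 := oful_cross_bound (hpos t) (hβ t) hu' (a t)
    have c3 := ha_opt t ht (astar t) (hastar_mem t ht)
    rw [sub_dotProduct] at c1 c2
    simp only [hqdef]
    nlinarith [Real.sqrt_nonneg (astar t ⬝ᵥ (Sig t)⁻¹ *ᵥ astar t)]
  -- sum over rounds
  have hsum1 : ∑ t ∈ Finset.range T, (θstar ⬝ᵥ astar t - θstar ⬝ᵥ a t)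
      ≤ 2 * B * ∑ t ∈ Finset.range T, Real.sqrt (q t) := by
    rw [Finset.mul_sum]
    refine Finset.sum_le_sum fun t htm => ?_
    have ht := Finset.mem_range.mp htm
    refine (hround t ht).trans ?_
    have := mul_le_mul_of_nonneg_right (hBt t ht) (Real.sqrt_nonneg (q t))
    nlinarith [Real.sqrt_nonneg (q t)]
  -- Cauchy–Schwarz over rounds
  have hsum2 : ∑ t ∈ Finset.range T, Real.sqrt (q t)
      ≤ Real.sqrt (T * ∑ t ∈ Finset.range T, q t) := by
    have hcs := Finset.sum_mul_sq_le_sq_mul_sq (Finset.range T)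
      (fun _ => (1:ℝ)) (fun t => Real.sqrt (q t))
    simp only [one_mul, one_pow] at hcs
    have hsq : ∀ t ∈ Finset.range T, Real.sqrt (q t) ^ 2 = q t := fun t _ =>
      Real.sq_sqrt (hq0 t)
    rw [Finset.sum_congr rfl hsq, Finset.sum_const, Finset.card_range, nsmul_eq_mul] at hcs
    have hnn : 0 ≤ ∑ t ∈ Finset.range T, Real.sqrt (q t) :=
      Finset.sum_nonneg fun t _ => Real.sqrt_nonneg _
    have hqs : 0 ≤ (T:ℝ) * ∑ t ∈ Finset.range T, q t :=
      mul_nonneg (Nat.cast_nonneg T) (Finset.sum_nonneg fun t _ => hq0 t)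
    rw [mul_one] at hcs
    exact (Real.le_sqrt hnn hqs).mpr hcs
  -- elliptical potential
  set b := L ^ 2 / lam with hbdef
  have hb0 : 0 ≤ b := by positivity
  have hdetrec : ∀ t, (Sig (t + 1)).det = (Sig t).det * (1 + q t) := by
    intro t
    have hstep : Sig (t + 1) = Sig t + vecMulVec (a t) (a t) := by
      rw [hSig (t + 1), hSig t, Finset.sum_range_succ, add_assoc]
    rw [hstep, oful_det_add_vecMulVec (hpos t)]
  have hlogdet : ∀ n : ℕ, Real.log (Sig n).det
      = d * Real.log lam + ∑ t ∈ Finset.range n, Real.log (1 + q t) := by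
    intro n
    induction n with
    | zero =>
      have h0 : Sig 0 = lam • (1 : Matrix (Fin d) (Fin d) ℝ) := by simp [hSig 0]
      rw [h0]
      rw [Matrix.det_smul, Matrix.det_one, mul_one, Real.log_pow]
      simp [Fintype.card_fin]
    | succ n ih =>
      rw [hdetrec n, Real.log_mul (hpos n).det_pos.ne' (by nlinarith [hq0 n]),
        Finset.sum_range_succ, ih]
      ring
  have hpot : ∑ t ∈ Finset.range T, q t
      ≤ (1 + b) * (Real.log (Sig T).det - d * Real.log lam) := by
    have h1 : ∑ t ∈ Finset.range T, q t
        ≤ (1 + b) * ∑ t ∈ Finset.range T, Real.log (1 + q t) := by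
      rw [Finset.mul_sum]
      refine Finset.sum_le_sum fun t htm => ?_
      exact oful_scalar_log (hq0 t) (hqb t (Finset.mem_range.mp htm))
    rw [hlogdet T]
    linarith [h1]
  -- trace bound
  have htrace : (Sig T).trace ≤ d * lam + T * L ^ 2 := by
    rw [hSig T, Matrix.trace_add, Matrix.trace_smul, Matrix.trace_one, Matrix.trace_sum]
    have h1 : ∑ l ∈ Finset.range T, (vecMulVec (a l) (a l)).trace ≤ T * L ^ 2 := by
      have h2 : ∀ l ∈ Finset.range T, (vecMulVec (a l) (a l)).trace ≤ L ^ 2 := by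
        intro l hl
        rw [oful_trace_vecMulVec]
        exact hdot_le l (Finset.mem_range.mp hl)
      calc ∑ l ∈ Finset.range T, (vecMulVec (a l) (a l)).trace
          ≤ ∑ _l ∈ Finset.range T, L ^ 2 := Finset.sum_le_sum h2
        _ = T * L ^ 2 := by rw [Finset.sum_const, Finset.card_range, nsmul_eq_mul]
    simp only [smul_eq_mul, Fintype.card_fin]
    linarith
  have htrpos : (0:ℝ) < d * lam := by
    exact mul_pos (Nat.cast_pos.mpr hd) hlam
  have htrlow : (d:ℝ) * lam ≤ (Sig T).trace := by
    rw [hSig T, Matrix.trace_add, Matrix.trace_smul, Matrix.trace_one, Matrix.trace_sum]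
    have h1 : 0 ≤ ∑ l ∈ Finset.range T, (vecMulVec (a l) (a l)).trace := by
      refine Finset.sum_nonneg fun l _ => ?_
      rw [oful_trace_vecMulVec]; exact oful_dotProduct_self_nonneg _
    simp only [smul_eq_mul, Fintype.card_fin]
    linarith
  -- determinant bound
  have hdT : (0:ℝ) < (d:ℝ) := Nat.cast_pos.mpr hd
  have hlogdet_le : Real.log (Sig T).det
      ≤ d * Real.log ((d * lam + T * L ^ 2) / d) := by
    have h1 : (Sig T).det ≤ ((Sig T).trace / d) ^ d :=
      oful_det_le_pow_trace_div (hpos T).posSemidef hd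
    have h2 : Real.log (Sig T).det ≤ Real.log (((Sig T).trace / d) ^ d) :=
      Real.log_le_log (hpos T).det_pos h1
    refine h2.trans ?_
    rw [Real.log_pow]
    have h3 : Real.log ((Sig T).trace / d) ≤ Real.log ((d * lam + T * L ^ 2) / d) := by
      apply Real.log_le_log (div_pos (lt_of_lt_of_le htrpos htrlow) hdT)
      exact div_le_div_of_nonneg_right htrace hdT.le
    exact mul_le_mul_of_nonneg_left h3 (by positivity)
  have hfinal_log : Real.log (Sig T).det - d * Real.log lam
      ≤ d * Real.log ((d * lam + T * L ^ 2) / (d * lam)) := by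
    have h1 : Real.log ((d * lam + T * L ^ 2) / d) - Real.log lam
        = Real.log ((d * lam + T * L ^ 2) / (d * lam)) := by
      rw [← Real.log_div (by positivity) hlam.ne', div_div]
    nlinarith [hlogdet_le, h1, hdT]
  -- combine
  set C := Real.log ((d * lam + T * L ^ 2) / (d * lam)) with hCdef
  have hsumq : ∑ t ∈ Finset.range T, q t ≤ (1 + b) * (d * C) := by
    refine hpot.trans ?_
    have h1b : (0:ℝ) < 1 + b := by linarith
    exact mul_le_mul_of_nonneg_left hfinal_log h1b.le
  have hTsumq : (T:ℝ) * ∑ t ∈ Finset.range T, q t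
      ≤ d * T * (1 + L ^ 2 / lam) * C := by
    have hT0 : (0:ℝ) ≤ T := Nat.cast_nonneg T
    calc (T:ℝ) * ∑ t ∈ Finset.range T, q t
        ≤ (T:ℝ) * ((1 + b) * (d * C)) := mul_le_mul_of_nonneg_left hsumq hT0
      _ = d * T * (1 + L ^ 2 / lam) * C := by rw [hbdef]; ring
  calc ∑ t ∈ Finset.range T, (θstar ⬝ᵥ astar t - θstar ⬝ᵥ a t)
      ≤ 2 * B * ∑ t ∈ Finset.range T, Real.sqrt (q t) := hsum1
    _ ≤ 2 * B * Real.sqrt (T * ∑ t ∈ Finset.range T, q t) := by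
        exact mul_le_mul_of_nonneg_left hsum2 (by positivity)
    _ ≤ 2 * B * Real.sqrt (d * T * (1 + L ^ 2 / lam) * C) := by
        exact mul_le_mul_of_nonneg_left (Real.sqrt_le_sqrt hTsumq) (by positivity)
end

section
/- Suppose for learners i and ⋆ at round t: U_i(t)/n_i(t) + c√(ℓ_i/n_i(t)) + R_i(n_i(t))/n_i(t) ≥ U_⋆(t)/n_⋆(t) − c√(ℓ_⋆/n_⋆(t)) (the misspecification test passes), and the concentration event holds: |n_j(t)μ⋆ − U_j(t) − Reg_j(t)| ≤ c√(n_j(t) ℓ_j) for j ∈ {i, ⋆}. Then Reg_i(t) ≤ 2c√(ℓ_i n_i(t)) + R_i(n_i(t)) + (n_i(t)/n_⋆(t)) Reg_⋆(t) + 2c √(ℓ_⋆) √(n_i(t)² / n_⋆(t)). -/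
open Real

/-- Algebraic consequence of passing the misspecification test together with the
concentration event: `Reg_i(t) ≤ 2c√(ℓ_i n_i) + R_i + (n_i/n⋆) Reg⋆
+ 2c√(ℓ⋆)√(n_i²/n⋆)`. -/
theorem misspec_test_regret_bound
    (ni ns Ui Us Regi Regs mustar Ri c li ls : ℝ)
    (hni : 0 < ni) (hns : 0 < ns) (hc : 0 < c) (hli : 0 < li) (hls : 0 < ls)
    (hRegi : 0 ≤ Regi) (hRegs : 0 ≤ Regs)
    -- the misspecification test passes
    (htest : Ui / ni + c * Real.sqrt (li / ni) + Ri / ni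
              ≥ Us / ns - c * Real.sqrt (ls / ns))
    -- concentration for learner i and for learner ⋆
    (hconci : |ni * mustar - Ui - Regi| ≤ c * Real.sqrt (ni * li))
    (hconcs : |ns * mustar - Us - Regs| ≤ c * Real.sqrt (ns * ls)) :
    Regi ≤ 2 * c * Real.sqrt (li * ni) + Ri + (ni / ns) * Regs
            + 2 * c * Real.sqrt ls * Real.sqrt (ni ^ 2 / ns) := by
  have hni' := hni.ne'
  have hns' := hns.ne'
  have sni : Real.sqrt (ni ^ 2) = ni := Real.sqrt_sq hni.le
  have sns : Real.sqrt (ns ^ 2) = ns := Real.sqrt_sq hns.le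
  set a := Real.sqrt (li / ni) with ha
  set b := Real.sqrt (ls / ns) with hb
  have A : Real.sqrt (li * ni) = a * ni := by
    rw [ha, ← sni, ← Real.sqrt_mul (by positivity)]
    congr 1; field_simp; ring_nf; rw [sni]
  have A' : Real.sqrt (ni * li) = a * ni := by rw [mul_comm]; exact A
  have B : Real.sqrt (ns * ls) = b * ns := by
    rw [hb, ← sns, ← Real.sqrt_mul (by positivity)]
    congr 1; field_simp; ring_nf; rw [sns]
  have D : Real.sqrt ls * Real.sqrt (ni ^ 2 / ns) = b * ni := by
    rw [← Real.sqrt_mul hls.le, show ls * (ni ^ 2 / ns) = ls / ns * ni ^ 2 by ring,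
      Real.sqrt_mul (by positivity), sni, hb]
  rw [A, show 2 * c * Real.sqrt ls * Real.sqrt (ni ^ 2 / ns) = 2 * c * (b * ni) by
    rw [mul_assoc, D]]
  have h1 := (abs_le.mp hconci).1
  have h2 := (abs_le.mp hconcs).2
  rw [A'] at h1
  rw [B] at h2
  have htest' : ni * ns * (Us / ns - c * b) ≤ ni * ns * (Ui / ni + c * a + Ri / ni) :=
    mul_le_mul_of_nonneg_left htest (by positivity)
  have hexp : ni * Us - c * b * ni * ns ≤ ns * Ui + c * a * ni * ns + ns * Ri := by
    have e1 : ni * ns * (Us / ns - c * b) = ni * Us - c * b * ni * ns := by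
      field_simp
    have e2 : ni * ns * (Ui / ni + c * a + Ri / ni) = ns * Ui + c * a * ni * ns + ns * Ri := by
      field_simp
    rw [e1, e2] at htest'
    exact htest'
  rw [← mul_le_mul_iff_right₀ hns]
  have e3 : ns * (2 * c * (a * ni) + Ri + ni / ns * Regs + 2 * c * (b * ni))
      = 2 * c * a * ni * ns + ns * Ri + ni * Regs + 2 * c * b * ni * ns := by
    field_simp
  rw [e3]
  nlinarith [mul_le_mul_of_nonneg_left h1 hns.le, mul_le_mul_of_nonneg_left h2 hni.le]
end

section
/- If additionally Reg_⋆(t) ≤ R_⋆(n_⋆(t)) (⋆ is well-specified) and R_i(n_i(t)) ≤ R_⋆(n_⋆(t)) + 1 (balancing), then the conclusion of the previous lemma implies Reg_i(t) ≤ 1 + (1 + n_i(t)/n_⋆(t)) R_⋆(n_⋆(t)) + 2c (1 + √(n_i(t)/n_⋆(t))) √(n_i(t) ℓ), where ℓ = max(ℓ_i, ℓ_⋆). -/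
open Real

theorem Real.sqrt_mul_sqrt_sq_div_le_sqrt_div_mul_sqrt_mul {a b k l : ℝ} (ha : 0 ≤ a)
    (hb : 0 ≤ b) (hkl : k ≤ l) : √k * √(a ^ 2 / b) ≤ √(a / b) * √(a * l) :=
  calc √k * √(a ^ 2 / b) ≤ √l * √(a ^ 2 / b) := by gcongr
    _ = √(a / b) * √(a * l) := by
      rw [← Real.sqrt_mul' l (by positivity), ← Real.sqrt_mul (div_nonneg ha hb)]
      congr 1
      ring

theorem regbound_nonelim_general
    (ni ns Regi Regs Ri Rs c li ls l : ℝ)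
    (hni : 0 < ni) (hns : 0 < ns) (hc : 0 < c)
    (hl : l = max li ls)
    -- conclusion of the previous lemma
    (hprev : Regi ≤ 2 * c * Real.sqrt (li * ni) + Ri + (ni / ns) * Regs
              + 2 * c * Real.sqrt ls * Real.sqrt (ni ^ 2 / ns))
    -- ⋆ is well-specified
    (hwell : Regs ≤ Rs)
    -- balancing
    (hbal : Ri ≤ Rs + 1) :
    Regi ≤ 1 + (1 + ni / ns) * Rs
            + 2 * c * (1 + Real.sqrt (ni / ns)) * Real.sqrt (ni * l) := by
  have hli : li ≤ l := hl ▸ le_max_left li ls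
  have hls : ls ≤ l := hl ▸ le_max_right li ls
  have hi : √(li * ni) ≤ √(ni * l) := by rw [mul_comm]; gcongr
  have hs := Real.sqrt_mul_sqrt_sq_div_le_sqrt_div_mul_sqrt_mul hni.le hns.le hls
  calc Regi ≤ 2 * c * √(li * ni) + Ri + ni / ns * Regs + 2 * c * (√ls * √(ni ^ 2 / ns)) := by
        linarith
    _ ≤ 2 * c * √(ni * l) + (Rs + 1) + ni / ns * Rs + 2 * c * (√(ni / ns) * √(ni * l)) := by
        gcongr
    _ = _ := by ring

/-- If moreover `Reg⋆ ≤ R⋆` (well-specification) and `R_i ≤ R⋆ + 1`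
(balancing), then the bound of the previous lemma implies
`Reg_i ≤ 1 + (1 + n_i/n⋆) R⋆ + 2c (1 + √(n_i/n⋆)) √(n_i ℓ)` where
`ℓ = max(ℓ_i, ℓ⋆)`. -/
theorem regbound_nonelim
    (ni ns Regi Regs Ri Rs c li ls l : ℝ)
    (hni : 0 < ni) (hns : 0 < ns) (hc : 0 < c)
    (hli : 0 < li) (hls : 0 < ls) (hl : l = max li ls)
    (hRegs : 0 ≤ Regs)
    -- conclusion of the previous lemma
    (hprev : Regi ≤ 2 * c * Real.sqrt (li * ni) + Ri + (ni / ns) * Regs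
              + 2 * c * Real.sqrt ls * Real.sqrt (ni ^ 2 / ns))
    -- ⋆ is well-specified
    (hwell : Regs ≤ Rs)
    -- balancing
    (hbal : Ri ≤ Rs + 1) :
    Regi ≤ 1 + (1 + ni / ns) * Rs
            + 2 * c * (1 + Real.sqrt (ni / ns)) * Real.sqrt (ni * l) :=
  regbound_nonelim_general ni ns Regi Regs Ri Rs c li ls l hni hns hc hl hprev hwell hbal
end
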